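/- Let S be a finite set of rational affine functionals on ℝ^n and θ ∈ ℝ^n. Then there exists θ' ∈ ℚ^n such that for every f ∈ S: f(θ) = 0 implies f(θ') = 0, f(θ) > 0 implies f(θ') > 0, and f(θ) < 0 implies f(θ') < 0. -/
import Mathlib


/-- A rational affine functional on `ℝⁿ`: `f x = Σ aᵢ xᵢ + q` with `aᵢ, q ∈ ℚ`. -/
def IsRatAffine {n : ℕ} (f : (Fin n → ℝ) → ℝ) : Prop :=
  ∃ (a : Fin n → ℚ) (q : ℚ), ∀ x, f x = (∑ i, (a i : ℝ) * x i) + (q : ℝ)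

private lemma ratAffine_continuous {n : ℕ} {f : (Fin n → ℝ) → ℝ} (h : IsRatAffine f) :
    Continuous f := by
  obtain ⟨a, q, hf⟩ := h
  have : f = fun x => (∑ i, (a i : ℝ) * x i) + (q : ℝ) := funext hf
  rw [this]
  fun_prop

/-- If every functional of `S` vanishing at `θ` vanishes identically, a rational
approximation of `θ` works. -/
private lemma approx_lemma {n : ℕ} (S : Set ((Fin n → ℝ) → ℝ)) (hS : S.Finite)
    (hrat : ∀ f ∈ S, IsRatAffine f) (θ : Fin n → ℝ)
    (hzero : ∀ f ∈ S, f θ = 0 → ∀ x, f x = 0) :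
    ∃ θ' : Fin n → ℚ, ∀ f ∈ S,
      (f θ = 0 → f (fun i => (θ' i : ℝ)) = 0) ∧
      (0 < f θ → 0 < f (fun i => (θ' i : ℝ))) ∧
      (f θ < 0 → f (fun i => (θ' i : ℝ)) < 0) := by
  classical
  set T : ((Fin n → ℝ) → ℝ) → Set (Fin n → ℝ) := fun f =>
    (if 0 < f θ then f ⁻¹' (Set.Ioi 0) else Set.univ) ∩
    (if f θ < 0 then f ⁻¹' (Set.Iio 0) else Set.univ) with hT
  have hTopen : ∀ f ∈ S, IsOpen (T f) := by
    intro f hf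
    have hc := ratAffine_continuous (hrat f hf)
    apply IsOpen.inter <;> split_ifs <;>
      first
        | exact isOpen_univ
        | exact IsOpen.preimage hc isOpen_Ioi
        | exact IsOpen.preimage hc isOpen_Iio
  have hUopen : IsOpen (⋂ f ∈ S, T f) := hS.isOpen_biInter hTopen
  have hθU : θ ∈ ⋂ f ∈ S, T f := by
    refine Set.mem_iInter₂.2 fun f hf => ?_
    constructor <;> split_ifs with h <;> simp_all
  have hD : Dense (Set.pi Set.univ fun _ : Fin n => Set.range ((↑) : ℚ → ℝ)) :=
    dense_pi Set.univ fun i _ => Rat.denseRange_cast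
  obtain ⟨x, hxD, hxU⟩ := hD.exists_mem_open hUopen ⟨θ, hθU⟩
  choose θ' hθ' using fun i => hxD i (Set.mem_univ i)
  have hx : (fun i => (θ' i : ℝ)) = x := funext hθ'
  refine ⟨θ', fun f hf => ?_⟩
  have hxT : x ∈ T f := Set.mem_iInter₂.1 hxU f hf
  rw [hx]
  refine ⟨fun h0 => hzero f hf h0 x, fun hpos => ?_, fun hneg => ?_⟩
  · have := hxT.1
    rw [if_pos hpos] at this
    exact this
  · have := hxT.2
    rw [if_pos hneg] at this
    exact this

private lemma cast_insertNth {n : ℕ} (j : Fin (n + 1)) (c : ℚ) (y : Fin n → ℚ) :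
    (fun i => ((Fin.insertNth (α := fun _ => ℚ) j c y i : ℚ) : ℝ)) =
      Fin.insertNth (α := fun _ => ℝ) j ((c : ℚ) : ℝ) (fun k => ((y k : ℚ) : ℝ)) := by
  funext i
  refine Fin.succAboveCases j ?_ (fun k => ?_) i <;> simp

private lemma main_aux : ∀ (n : ℕ) (S : Set ((Fin n → ℝ) → ℝ)), S.Finite →
    (∀ f ∈ S, IsRatAffine f) → ∀ θ : Fin n → ℝ, ∃ θ' : Fin n → ℚ, ∀ f ∈ S,
      (f θ = 0 → f (fun i => (θ' i : ℝ)) = 0) ∧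
      (0 < f θ → 0 < f (fun i => (θ' i : ℝ))) ∧
      (f θ < 0 → f (fun i => (θ' i : ℝ)) < 0) := by
  intro n
  induction n with
  | zero =>
    intro S hS hrat θ
    refine approx_lemma S hS hrat θ fun f hf h0 x => ?_
    have hxθ : x = θ := funext fun i => i.elim0
    rw [hxθ]; exact h0
  | succ n ih =>
    intro S hS hrat θ
    by_cases h : ∃ f0 ∈ S, ∃ (b : Fin (n + 1) → ℚ) (r : ℚ) (j : Fin (n + 1)),
        (∀ x, f0 x = (∑ i, (b i : ℝ) * x i) + (r : ℝ)) ∧ f0 θ = 0 ∧ b j ≠ 0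
    · obtain ⟨f0, hf0S, b, r, j, hf0, hθ0, hbj⟩ := h
      have hbj' : ((b j : ℚ) : ℝ) ≠ 0 := by exact_mod_cast hbj
      set ℓR : (Fin n → ℝ) → ℝ :=
        fun y => -(((∑ k, ((b (j.succAbove k) : ℚ) : ℝ) * y k) + (r : ℝ)) / ((b j : ℚ) : ℝ))
        with hℓR
      set G : ((Fin (n + 1) → ℝ) → ℝ) → ((Fin n → ℝ) → ℝ) :=
        fun f => fun y => f (Fin.insertNth j (ℓR y) y) with hG
      have hsub : ∀ f ∈ S, IsRatAffine (G f) := by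
        intro f hfS
        obtain ⟨a, q, hf⟩ := hrat f hfS
        refine ⟨fun k => a (j.succAbove k) - a j * b (j.succAbove k) / b j,
          q - a j * r / b j, fun y => ?_⟩
        have hB : (∑ k, (((a (j.succAbove k) - a j * b (j.succAbove k) / b j : ℚ)) : ℝ) * y k)
            = (∑ k, ((a (j.succAbove k) : ℚ) : ℝ) * y k)
              - (((a j : ℚ) : ℝ) / ((b j : ℚ) : ℝ)) *
                ∑ k, ((b (j.succAbove k) : ℚ) : ℝ) * y k := by
          rw [Finset.mul_sum, ← Finset.sum_sub_distrib]
          exact Finset.sum_congr rfl fun k _ => by push_cast; ring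
        simp only [hG]
        rw [hf, Fin.sum_univ_succAbove (fun i => (a i : ℝ) * Fin.insertNth (α := fun _ => ℝ) j (ℓR y) y i) j]
        simp only [Fin.insertNth_apply_same, Fin.insertNth_apply_succAbove]
        rw [hB, hℓR]
        push_cast
        field_simp
        ring
      set θr : Fin n → ℝ := fun k => θ (j.succAbove k) with hθr
      have hθj : ℓR θr = θ j := by
        have h1 := hf0 θ
        rw [Fin.sum_univ_succAbove (fun i => (b i : ℝ) * θ i) j, hθ0] at h1
        rw [hℓR]
        field_simp
        linarith [h1.symm]
      have hins : Fin.insertNth j (θ j) θr = θ := Fin.insertNth_self_removeNth j θ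
      have hGθ : ∀ f, G f θr = f θ := by
        intro f
        simp only [hG]
        rw [hθj, hins]
      obtain ⟨y, hy⟩ := ih (G '' S) (hS.image G)
        (fun f' hf' => by obtain ⟨f, hfS, rfl⟩ := hf'; exact hsub f hfS) θr
      set c : ℚ := -(((∑ k, b (j.succAbove k) * y k) + r) / b j) with hc
      refine ⟨Fin.insertNth j c y, fun f hfS => ?_⟩
      have hcℓ : ((c : ℚ) : ℝ) = ℓR (fun k => ((y k : ℚ) : ℝ)) := by
        rw [hc, hℓR]
        push_cast
        ring
      have hkey : f (fun i => ((Fin.insertNth (α := fun _ => ℚ) j c y i : ℚ) : ℝ))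
          = G f (fun k => ((y k : ℚ) : ℝ)) := by
        rw [cast_insertNth, hcℓ]
      rw [hkey, ← hGθ f]
      exact hy (G f) ⟨f, hfS, rfl⟩
    · refine approx_lemma S hS hrat θ fun f hfS h0 x => ?_
      obtain ⟨a, q, hf⟩ := hrat f hfS
      have ha : ∀ j, a j = 0 := by
        intro j
        by_contra haj
        exact h ⟨f, hfS, a, q, j, hf, h0, haj⟩
      have hq : (q : ℝ) = 0 := by
        have h2 := hf θ
        rw [h0] at h2
        simp [ha] at h2
        linarith
      rw [hf x]
      simp [ha, hq]

/-- given a finite set `S` of rational affine functionals on `ℝⁿ` and any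
`θ ∈ ℝⁿ`, there is a rational point `θ'` with the same sign pattern (including zeros)
as `θ` on every member of `S`. -/
theorem exists_rational_weight_same_signs {n : ℕ}
    (S : Set ((Fin n → ℝ) → ℝ)) (hS : S.Finite)
    (hrat : ∀ f ∈ S, IsRatAffine f) (θ : Fin n → ℝ) :
    ∃ θ' : Fin n → ℚ, ∀ f ∈ S,
      (f θ = 0 → f (fun i => (θ' i : ℝ)) = 0) ∧
      (0 < f θ → 0 < f (fun i => (θ' i : ℝ))) ∧
      (f θ < 0 → f (fun i => (θ' i : ℝ)) < 0) := by
  exact main_aux n S hS hrat θ
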